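/- arXiv:2604.14429 — 2 statements merged into one kernel-verified Lean document; each statement's English description precedes it below -/
import Mathlib

section
/- For every integer n ≥ 1 and every z ∈ ℂ with |z| > 2, the series φ_n(z) := Σ_{m=0}^{∞} [(2m+n−1)!/(m!·(m+n)!)] · z^{−2m} converges absolutely and satisfies |φ_n(z)| ≤ (2^n/n) · |z|²/(|z|² − 4). -/
/-!
Since `(2m+n)! = C(2m+n, m) · m! · (m+n)!` and `C(2m+n, m) ≤ 2^(2m+n)`, the coefficient
`(2m+n-1)!/(m!(m+n)!) = (2m+n)!/((2m+n) · m!(m+n)!)` is at most `(2^n/n) · 4^m`. Hence the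
`m`-th term of `φ_n(z)` is bounded by `(2^n/n) · (4/|z|²)^m`, a geometric series of ratio
`4/|z|² < 1` whose sum is `(2^n/n) · |z|²/(|z|² - 4)`.
-/

open Nat

theorem Nat.factorial_add_le_two_pow_mul (i j : ℕ) : (i + j)! ≤ 2 ^ (i + j) * (i ! * j !) := by
  rw [← add_choose_mul_factorial_mul_factorial, mul_assoc]
  exact Nat.mul_le_mul_right _ (choose_le_two_pow _ _)

theorem Nat.mul_factorial_two_mul_add_sub_one_le {n : ℕ} (hn : 1 ≤ n) (m : ℕ) :
    n * (2 * m + n - 1)! ≤ 2 ^ (2 * m + n) * (m ! * (m + n)!) :=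
  calc n * (2 * m + n - 1)!
      ≤ (2 * m + n) * (2 * m + n - 1)! := Nat.mul_le_mul_right _ (by omega)
    _ = (m + (m + n))! := by rw [mul_factorial_pred (by omega), ← add_assoc, two_mul]
    _ ≤ 2 ^ (2 * m + n) * (m ! * (m + n)!) := by
        simpa only [← add_assoc, ← two_mul] using factorial_add_le_two_pow_mul m (m + n)

theorem phi_coeff_le {n : ℕ} (hn : 1 ≤ n) (m : ℕ) :
    ((2 * m + n - 1)! : ℝ) / (m ! * (m + n)!) ≤ 2 ^ n / n * 4 ^ m := by
  have hn0 : (0 : ℝ) < n := by exact_mod_cast hn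
  have key : (n : ℝ) * (2 * m + n - 1)! ≤ 2 ^ (2 * m + n) * (m ! * (m + n)!) := by
    exact_mod_cast mul_factorial_two_mul_add_sub_one_le hn m
  rw [div_le_iff₀ (by positivity), div_mul_eq_mul_div, div_mul_eq_mul_div, le_div_iff₀' hn0]
  exact key.trans_eq (by rw [pow_add, pow_mul]; ring)

theorem norm_phi_term_le {n : ℕ} (hn : 1 ≤ n) (z : ℂ) (m : ℕ) :
    ‖((2 * m + n - 1)! : ℂ) / (m ! * (m + n)!) * (z ^ (2 * m))⁻¹‖ ≤
      2 ^ n / n * (4 / ‖z‖ ^ 2) ^ m := by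
  have hnorm : ‖((2 * m + n - 1)! : ℂ) / (m ! * (m + n)!) * (z ^ (2 * m))⁻¹‖ =
      ((2 * m + n - 1)! : ℝ) / (m ! * (m + n)!) * ((‖z‖ ^ 2)⁻¹) ^ m := by
    simp only [norm_mul, norm_div, norm_inv, norm_pow, Complex.norm_natCast, pow_mul, inv_pow]
  rw [hnorm, div_eq_mul_inv 4, mul_pow, ← mul_assoc]
  exact mul_le_mul_of_nonneg_right (phi_coeff_le hn m) (by positivity)

theorem summable_norm_and_norm_tsum_le_of_norm_le_geometric {E : Type*}
    [SeminormedAddCommGroup E] {f : ℕ → E} {C r : ℝ} (hr0 : 0 ≤ r) (hr1 : r < 1)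
    (hf : ∀ m, ‖f m‖ ≤ C * r ^ m) :
    Summable (fun m => ‖f m‖) ∧ ‖∑' m, f m‖ ≤ C * (1 - r)⁻¹ := by
  have hgeom : HasSum (fun m => C * r ^ m) (C * (1 - r)⁻¹) :=
    (hasSum_geometric_of_lt_one hr0 hr1).mul_left C
  exact ⟨hgeom.summable.of_nonneg_of_le (fun m => norm_nonneg _) hf,
    tsum_of_norm_bounded hgeom hf⟩

/-- **Absolute convergence and bound for the auxiliary series `φ_n`:** for `n ≥ 1` and
`|z| > 2`, the series `φ_n(z) = Σ_m (2m+n-1)!/(m!(m+n)!) · z^{-2m}` converges absolutely and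
`|φ_n(z)| ≤ (2^n/n) · |z|²/(|z|² - 4)`. -/
theorem phi_series_abs_convergent_and_bounded
    (n : ℕ) (hn : 1 ≤ n) (z : ℂ) (hz : 2 < ‖z‖) :
    Summable (fun m : ℕ => ‖
      (((2 * m + n - 1).factorial : ℂ) /
          ((m.factorial : ℂ) * ((m + n).factorial : ℂ)) * (z ^ (2 * m))⁻¹)‖) ∧
    ‖(∑' m : ℕ,
        ((2 * m + n - 1).factorial : ℂ) /
          ((m.factorial : ℂ) * ((m + n).factorial : ℂ)) * (z ^ (2 * m))⁻¹)‖ ≤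
      (2 ^ n / n) * ((‖z‖) ^ 2 / ((‖z‖) ^ 2 - 4)) := by
  have hz2 : 4 < ‖z‖ ^ 2 := by nlinarith
  have hratio : 4 / ‖z‖ ^ 2 < 1 := (div_lt_one (by linarith)).mpr hz2
  have hsum : (1 - 4 / ‖z‖ ^ 2)⁻¹ = ‖z‖ ^ 2 / (‖z‖ ^ 2 - 4) := by field_simp
  rw [← hsum]
  exact summable_norm_and_norm_tsum_le_of_norm_le_geometric (by positivity) hratio
    (norm_phi_term_le hn z)
end

section
/- Let c ∈ ℂ, R₀ := max(2, 2|c|), and let p_n ∈ ℂ[z] (n ≥ 0) be defined by p_0 = 1, p_1 = z − c, and p_{n+1} = z·p_n − p_{n−1} for n ≥ 1. Define w(z) := Σ_{n=1}^{∞} n·c^{n−1}·z^{−n}·φ_n(z) for |z| > R₀, where φ_n(z) := Σ_{m=0}^{∞} [(2m+n−1)!/(m!·(m+n)!)] · z^{−2m}. Then for every R > R₀ and all n, m ≥ 0: (1/(2πi)) ∮_{|z|=R} p_n(z)·p_m(z)·w(z) dz = δ_{n,m}. -/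
/-!
The recurrence says `p_n(J_c) e_0 = e_n`, where the Jacobi matrix `J_c` acts on sequences. As `J_c`
is symmetric, so is every `q(J_c)`, and the moment functional `L(q) = (q(J_c) e_0)_0` satisfies
`L(p_n p_m) = (p_n(J_c) e_m)_0 = (p_n(J_c) e_0)_m = δ_{n,m}`.

On `|z| = R` the weight is the absolutely convergent double Laurent series
`w(z) = Σ_{a,m} c^a B(a+1, m) z^{-(a+2m+1)}` with ballot numbers `B`. Integrating term by term,
`(2πi)⁻¹ ∮ q w dz = Σ_k q_k s_k` with `s_k = Σ_{a+2m=k} c^a B(a+1, m)`, and the Pascal rule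
`B(M+1, m+1) = B(M, m+1) + B(M+2, m)` shows that `s_k = (J_c^k e_0)_0`, so the integral is `L(q)`.
-/

/-- The auxiliary function `φ_n(z) = Σ_{m=0}^∞ (2m+n-1)!/(m!(m+n)!) · z^{-2m}` (for `|z| > 2`). -/
noncomputable def phiFun (n : ℕ) (z : ℂ) : ℂ :=
  ∑' m : ℕ, ((2 * m + n - 1).factorial : ℂ) /
    ((m.factorial : ℂ) * ((m + n).factorial : ℂ)) * (z ^ (2 * m))⁻¹

/-- The complex weight `w(z) = Σ_{n=1}^∞ n·c^{n-1}·z^{-n}·φ_n(z)` (for `|z| > max(2, 2|c|)`),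
written here with the summation index shifted to start at `0`. -/
noncomputable def wFun (c : ℂ) (z : ℂ) : ℂ :=
  ∑' n : ℕ, ((n + 1 : ℕ) : ℂ) * c ^ n * (z ^ (n + 1))⁻¹ * phiFun (n + 1) z

open Polynomial Finset

open scoped Nat

/-- The ballot numbers `M / (2m + M) · (2m + M).choose m`; `ballot (n + 1) m` is `n + 1` times the
coefficient of `z^{-2m}` in `phiFun (n + 1)`. -/
noncomputable def ballot (M m : ℕ) : ℂ :=
  M * ((2 * m + M - 1)! / (m ! * (m + M)!))

theorem ballot_zero_left (m : ℕ) : ballot 0 m = 0 := by simp [ballot]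

theorem ballot_succ_zero (M : ℕ) : ballot (M + 1) 0 = 1 := by
  have := (Nat.cast_ne_zero (R := ℂ)).2 (Nat.factorial_ne_zero M)
  simp only [ballot, mul_zero, zero_add, add_tsub_cancel_right, Nat.factorial_zero, Nat.cast_one,
    one_mul, Nat.factorial_succ M, Nat.cast_mul]
  field_simp

theorem ballot_succ_succ (M m : ℕ) :
    ballot (M + 1) (m + 1) = ballot M (m + 1) + ballot (M + 2) m := by
  have h1 := (Nat.cast_ne_zero (R := ℂ)).2 (Nat.factorial_ne_zero m)
  have h2 := (Nat.cast_ne_zero (R := ℂ)).2 (Nat.factorial_ne_zero (m + M))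
  have h3 : (m + 1 : ℂ) ≠ 0 := by exact_mod_cast Nat.succ_ne_zero m
  have h4 : (m + M + 1 : ℂ) ≠ 0 := by exact_mod_cast Nat.succ_ne_zero (m + M)
  have h5 : (m + M + 1 + 1 : ℂ) ≠ 0 := by exact_mod_cast Nat.succ_ne_zero (m + M + 1)
  simp only [ballot, show 2 * (m + 1) + (M + 1) - 1 = 2 * m + M + 2 by omega,
    show 2 * (m + 1) + M - 1 = 2 * m + M + 1 by omega,
    show 2 * m + (M + 2) - 1 = 2 * m + M + 1 by omega,
    show m + 1 + (M + 1) = m + M + 2 by omega, show m + 1 + M = m + M + 1 by omega,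
    show m + (M + 2) = m + M + 2 by omega, Nat.factorial_succ, Nat.cast_mul]
  push_cast
  field_simp
  ring

theorem norm_ballot_succ_le (a m : ℕ) : ‖ballot (a + 1) m‖ ≤ (a + 1) * 2 ^ (a + 2 * m) := by
  have hfac : ((2 * m + a)! : ℝ) ≤ 2 ^ (a + 2 * m) * (m ! * (m + a + 1)!) := by
    have h := Nat.add_choose_mul_factorial_mul_factorial m (m + a)
    have hc := Nat.choose_le_two_pow (m + (m + a)) (m + a)
    rw [show m + (m + a) = 2 * m + a by omega] at h hc
    rw [show a + 2 * m = 2 * m + a by omega]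
    have : (m + a)! ≤ (m + a + 1)! := Nat.factorial_le (by omega)
    rw [← h, mul_assoc]
    exact_mod_cast Nat.mul_le_mul hc (Nat.mul_le_mul_left _ this)
  have hpos : (0 : ℝ) < m ! * (m + a + 1)! := by positivity
  rw [ballot, show 2 * m + (a + 1) - 1 = 2 * m + a by omega, show m + (a + 1) = m + a + 1 by omega]
  simp only [norm_mul, norm_div, Complex.norm_natCast]
  push_cast
  exact mul_le_mul_of_nonneg_left ((div_le_iff₀ hpos).2 hfac) (by positivity)

/-- `J_c` acting on all sequences; `Pi.single n 1` is the basis vector `e_n`. -/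
noncomputable def jacobiOp (c : ℂ) : Module.End ℂ (ℕ → ℂ) where
  toFun f
    | 0 => c * f 0 + f 1
    | n + 1 => f n + f (n + 2)
  map_add' f g := by
    funext n
    cases n <;> simp only [Pi.add_apply] <;> ring
  map_smul' a f := by
    funext n
    cases n <;> simp only [Pi.smul_apply, smul_eq_mul, RingHom.id_apply] <;> ring

section jacobiOp

variable (c : ℂ)

@[simp]
theorem jacobiOp_apply_zero (f : ℕ → ℂ) : jacobiOp c f 0 = c * f 0 + f 1 := rfl

@[simp]
theorem jacobiOp_apply_succ (f : ℕ → ℂ) (n : ℕ) :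
    jacobiOp c f (n + 1) = f n + f (n + 2) :=
  rfl

theorem jacobiOp_single_zero :
    jacobiOp c (Pi.single 0 1) = c • Pi.single 0 1 + Pi.single 1 1 := by
  funext i
  rcases i with _ | _ | i <;> simp

theorem jacobiOp_single_succ (n : ℕ) :
    jacobiOp c (Pi.single (n + 1) 1) = Pi.single n 1 + Pi.single (n + 2) 1 := by
  funext i
  rcases i with _ | i
  · simp [Pi.single_apply, eq_comm]
  · simp only [jacobiOp_apply_succ, Pi.add_apply, Pi.single_apply]
    split_ifs <;> first | (exfalso; omega) | norm_num

theorem pow_jacobiOp_single_apply_comm (b i j : ℕ) :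
    (jacobiOp c ^ b) (Pi.single i 1) j = (jacobiOp c ^ b) (Pi.single j 1) i := by
  induction b generalizing i j with
  | zero => simp [Pi.single_apply, eq_comm]
  | succ b ih =>
    conv_rhs => rw [pow_succ', Module.End.mul_apply]
    rw [pow_succ, Module.End.mul_apply]
    rcases i with _ | i
    · simp [jacobiOp_single_zero, ih _ j]
    · simp [jacobiOp_single_succ, ih _ j]

theorem aeval_jacobiOp_single_apply_comm (q : ℂ[X]) (i j : ℕ) :
    aeval (jacobiOp c) q (Pi.single i 1) j = aeval (jacobiOp c) q (Pi.single j 1) i := by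
  induction q using Polynomial.induction_on' with
  | add p q hp hq => simp [hp, hq]
  | monomial k a => simp [aeval_monomial, pow_jacobiOp_single_apply_comm c k i j]

theorem aeval_jacobiOp_single_zero {p : ℕ → ℂ[X]} (hp0 : p 0 = 1) (hp1 : p 1 = X - C c)
    (hrec : ∀ n : ℕ, 1 ≤ n → p (n + 1) = X * p n - p (n - 1)) :
    ∀ n, aeval (jacobiOp c) (p n) (Pi.single 0 1) = Pi.single n 1
  | 0 => by simp [hp0]
  | 1 => by simp [hp1, jacobiOp_single_zero]
  | n + 2 => by
    rw [hrec (n + 1) le_add_self, map_sub, map_mul, aeval_X, LinearMap.sub_apply,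
      Module.End.mul_apply, aeval_jacobiOp_single_zero hp0 hp1 hrec (n + 1), add_tsub_cancel_right,
      aeval_jacobiOp_single_zero hp0 hp1 hrec n, jacobiOp_single_succ, add_sub_cancel_left]

noncomputable def jacobiMoment (q : ℂ[X]) : ℂ :=
  aeval (jacobiOp c) q (Pi.single 0 1) 0

theorem jacobiMoment_mul_eq_ite {p : ℕ → ℂ[X]} (hp0 : p 0 = 1) (hp1 : p 1 = X - C c)
    (hrec : ∀ n : ℕ, 1 ≤ n → p (n + 1) = X * p n - p (n - 1)) (n m : ℕ) :
    jacobiMoment c (p n * p m) = if n = m then 1 else 0 := by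
  rw [jacobiMoment, map_mul, Module.End.mul_apply, aeval_jacobiOp_single_zero c hp0 hp1 hrec m,
    aeval_jacobiOp_single_apply_comm, aeval_jacobiOp_single_zero c hp0 hp1 hrec n,
    Pi.single_apply]
  simp only [eq_comm]

end jacobiOp

/-- The `m`-th term of the closed form of `(J_c^k e_0)_n` (`pow_jacobiOp_single_zero`). -/
noncomputable def jacobiColumnTerm (c : ℂ) (k n m : ℕ) : ℂ :=
  if n + 2 * m ≤ k then c ^ (k - (n + 2 * m)) * ballot (k - 2 * m + 1) m else 0

noncomputable def jacobiColumn (c : ℂ) (k n : ℕ) : ℂ :=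
  ∑ m ∈ range (k + 1), jacobiColumnTerm c k n m

section jacobiColumn

variable (c : ℂ)

theorem jacobiColumnTerm_add (a n m : ℕ) :
    jacobiColumnTerm c (a + (n + 2 * m)) n m = c ^ a * ballot (a + n + 1) m := by
  rw [jacobiColumnTerm, if_pos le_add_self, Nat.add_sub_cancel,
    show a + (n + 2 * m) - 2 * m = a + n by omega]

theorem jacobiColumnTerm_of_lt {k n m : ℕ} (h : k < n + 2 * m) : jacobiColumnTerm c k n m = 0 :=
  if_neg h.not_ge

theorem jacobiColumnTerm_succ_succ_zero (k j : ℕ) :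
    jacobiColumnTerm c (k + 1) (j + 1) 0 = jacobiColumnTerm c k j 0 := by
  by_cases h : j ≤ k
  · obtain ⟨a, rfl⟩ := Nat.exists_eq_add_of_le' h
    rw [show a + j + 1 = a + (j + 1 + 2 * 0) by ring, show a + j = a + (j + 2 * 0) by ring,
      jacobiColumnTerm_add, jacobiColumnTerm_add, ballot_succ_zero, ballot_succ_zero]
  · rw [jacobiColumnTerm_of_lt c (by omega), jacobiColumnTerm_of_lt c (by omega)]

theorem jacobiColumnTerm_succ_succ_succ (k j m : ℕ) :
    jacobiColumnTerm c (k + 1) (j + 1) (m + 1) =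
      jacobiColumnTerm c k j (m + 1) + jacobiColumnTerm c k (j + 2) m := by
  by_cases h : j + 2 * (m + 1) ≤ k
  · obtain ⟨a, rfl⟩ := Nat.exists_eq_add_of_le' h
    rw [show a + (j + 2 * (m + 1)) + 1 = a + (j + 1 + 2 * (m + 1)) by ring,
      jacobiColumnTerm_add, jacobiColumnTerm_add,
      show a + (j + 2 * (m + 1)) = a + (j + 2 + 2 * m) by ring, jacobiColumnTerm_add,
      show a + (j + 1) + 1 = a + j + 1 + 1 by ring, ballot_succ_succ]
    ring_nf
  · rw [jacobiColumnTerm_of_lt c (by omega), jacobiColumnTerm_of_lt c (by omega),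
      jacobiColumnTerm_of_lt c (by omega), add_zero]

theorem jacobiColumnTerm_succ_zero_zero (k : ℕ) :
    jacobiColumnTerm c (k + 1) 0 0 = c * jacobiColumnTerm c k 0 0 := by
  rw [show k + 1 = (k + 1) + (0 + 2 * 0) by ring, show k = k + (0 + 2 * 0) by ring,
    jacobiColumnTerm_add, jacobiColumnTerm_add, ballot_succ_zero, ballot_succ_zero, pow_succ]
  ring

theorem jacobiColumnTerm_succ_zero_succ (k m : ℕ) :
    jacobiColumnTerm c (k + 1) 0 (m + 1) =
      c * jacobiColumnTerm c k 0 (m + 1) + jacobiColumnTerm c k 1 m := by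
  by_cases h : 1 + 2 * m ≤ k
  · obtain ⟨a, rfl⟩ := Nat.exists_eq_add_of_le' h
    rw [show a + (1 + 2 * m) + 1 = a + (0 + 2 * (m + 1)) by ring, jacobiColumnTerm_add,
      jacobiColumnTerm_add, show a + 0 + 1 = a + 1 by ring, ballot_succ_succ]
    rcases a with _ | a
    · rw [jacobiColumnTerm_of_lt c (by omega), ballot_zero_left]
      ring
    · rw [show a + 1 + (1 + 2 * m) = a + (0 + 2 * (m + 1)) by ring, jacobiColumnTerm_add]
      ring_nf
  · rw [jacobiColumnTerm_of_lt c (by omega), jacobiColumnTerm_of_lt c (by omega),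
      jacobiColumnTerm_of_lt c (by omega), mul_zero, add_zero]

theorem sum_range_succ_succ_jacobiColumnTerm (k n : ℕ) :
    ∑ m ∈ range (k + 2), jacobiColumnTerm c k n m = jacobiColumn c k n := by
  rw [sum_range_succ, jacobiColumnTerm_of_lt c (by omega), add_zero, jacobiColumn]

theorem jacobiColumn_succ_succ (k j : ℕ) :
    jacobiColumn c (k + 1) (j + 1) = jacobiColumn c k j + jacobiColumn c k (j + 2) := by
  rw [jacobiColumn, sum_range_succ', jacobiColumnTerm_succ_succ_zero]
  simp only [jacobiColumnTerm_succ_succ_succ, sum_add_distrib]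
  rw [← jacobiColumn, ← sum_range_succ_succ_jacobiColumnTerm c k j, sum_range_succ' _ (k + 1)]
  ring

theorem jacobiColumn_succ_zero (k : ℕ) :
    jacobiColumn c (k + 1) 0 = c * jacobiColumn c k 0 + jacobiColumn c k 1 := by
  rw [jacobiColumn, sum_range_succ', jacobiColumnTerm_succ_zero_zero]
  simp only [jacobiColumnTerm_succ_zero_succ, sum_add_distrib]
  rw [← jacobiColumn, ← sum_range_succ_succ_jacobiColumnTerm c k 0, sum_range_succ' _ (k + 1),
    mul_add, mul_sum]
  ring

theorem pow_jacobiOp_single_zero (k : ℕ) :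
    (jacobiOp c ^ k) (Pi.single 0 1) = jacobiColumn c k := by
  induction k with
  | zero =>
    funext n
    rcases n with _ | n
    · simp [jacobiColumn, jacobiColumnTerm, ballot_succ_zero]
    · simp [jacobiColumn, jacobiColumnTerm]
  | succ k ih =>
    funext n
    rw [pow_succ', Module.End.mul_apply, ih]
    rcases n with _ | n
    · rw [jacobiOp_apply_zero, jacobiColumn_succ_zero]
    · rw [jacobiOp_apply_succ, jacobiColumn_succ_succ]

theorem jacobiMoment_monomial (k : ℕ) (r : ℂ) :
    jacobiMoment c (monomial k r) = r * jacobiColumn c k 0 := by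
  simp [jacobiMoment, aeval_monomial, pow_jacobiOp_single_zero]

end jacobiColumn

open Complex Metric Real

theorem hasSum_circleIntegral_of_norm_le {ι E : Type*} [Countable ι] [NormedAddCommGroup E]
    [NormedSpace ℂ E] {F : ι → ℂ → E} {f : ℂ → E} {u : ι → ℝ} {c : ℂ} {R : ℝ}
    (hF : ∀ i, ContinuousOn (F i) (sphere c |R|))
    (hFu : ∀ i, ∀ z ∈ sphere c |R|, ‖F i z‖ ≤ u i)
    (hu : Summable u) (hf : ∀ z ∈ sphere c |R|, HasSum (fun i => F i z) (f z)) :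
    HasSum (fun i => ∮ z in C(c, R), F i z) (∮ z in C(c, R), f z) := by
  refine intervalIntegral.hasSum_integral_of_dominated_convergence (fun i _ => |R| * u i)
    (fun i => ?_) (fun i => .of_forall fun θ _ => ?_) (.of_forall fun _ _ => hu.mul_left _)
    intervalIntegrable_const
    (.of_forall fun θ _ => (hf _ (circleMap_mem_sphere' c R θ)).const_smul _)
  · simp only [deriv_circleMap]
    refine (((continuous_circleMap 0 R).mul continuous_const).smul ?_).aestronglyMeasurable
    exact (hF i).comp_continuous (continuous_circleMap c R) (circleMap_mem_sphere' c R)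
  · simp only [deriv_circleMap, norm_smul, norm_mul, norm_I, norm_circleMap_zero, mul_one]
    exact mul_le_mul_of_nonneg_left (hFu i _ (circleMap_mem_sphere' c R θ)) (abs_nonneg R)

theorem circleIntegral_pow_mul_inv_pow {R : ℝ} (hR : 0 < R) (i k : ℕ) :
    (∮ z in C(0, R), z ^ i * (z ^ (k + 1))⁻¹) = if i = k then 2 * π * I else 0 := by
  have hzpow : Set.EqOn (fun z : ℂ => z ^ i * (z ^ (k + 1))⁻¹)
      (fun z => (z - 0) ^ ((i : ℤ) - (k + 1))) (sphere 0 R) := fun z hz => by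
    dsimp only
    rw [sub_zero, zpow_sub₀ (ne_of_mem_sphere hz hR.ne'), div_eq_mul_inv]
    norm_cast
  rw [circleIntegral.integral_congr hR.le hzpow]
  split_ifs with h
  · subst h
    simp only [show (i : ℤ) - (i + 1) = -1 by ring, zpow_neg_one]
    exact circleIntegral.integral_sub_inv_of_mem_ball (mem_ball_self hR)
  · exact circleIntegral.integral_sub_zpow_of_ne (by omega) _ _ _

theorem continuousOn_eval_mul_inv_pow (P : ℂ[X]) {R : ℝ} (hR : R ≠ 0) (n : ℕ) :
    ContinuousOn (fun z => P.eval z * (z ^ n)⁻¹) (sphere 0 R) :=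
  P.continuous.continuousOn.mul ((continuousOn_pow n).inv₀ fun _ hz =>
    pow_ne_zero _ (ne_of_mem_sphere hz hR))

theorem circleIntegral_eval_mul_inv_pow (P : ℂ[X]) {R : ℝ} (hR : 0 < R) (k : ℕ) :
    (∮ z in C(0, R), P.eval z * (z ^ (k + 1))⁻¹) = 2 * π * I * P.coeff k := by
  induction P using Polynomial.induction_on' with
  | add p q hp hq =>
    simp only [eval_add, add_mul, coeff_add, mul_add]
    rw [circleIntegral.integral_add
      ((continuousOn_eval_mul_inv_pow p hR.ne' _).circleIntegrable hR.le)
      ((continuousOn_eval_mul_inv_pow q hR.ne' _).circleIntegrable hR.le), hp, hq]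
  | monomial n a =>
    simp only [eval_monomial, mul_assoc, circleIntegral.integral_const_mul,
      circleIntegral_pow_mul_inv_pow hR, coeff_monomial]
    split_ifs <;> ring

noncomputable def wCoeff (c : ℂ) (q : ℕ × ℕ) : ℂ :=
  c ^ q.1 * ballot (q.1 + 1) q.2

theorem hasSum_wCoeff_mul_coeff (c : ℂ) (P : ℂ[X]) :
    HasSum (fun q : ℕ × ℕ => wCoeff c q * P.coeff (q.1 + 2 * q.2)) (jacobiMoment c P) := by
  induction P using Polynomial.induction_on' with
  | add p q hp hq =>
    simpa [jacobiMoment, mul_add] using hp.add hq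
  | monomial k r =>
    simp only [coeff_monomial, jacobiMoment_monomial]
    have hsupp : ∀ q ∉ range (k + 1) ×ˢ range (k + 1),
        wCoeff c q * (if k = q.1 + 2 * q.2 then r else 0) = 0 := fun q hq => by
      rw [if_neg, mul_zero]
      rintro rfl
      exact hq (mem_product.2 ⟨mem_range.2 (by omega), mem_range.2 (by omega)⟩)
    convert (hasSum_sum_of_ne_finset_zero hsupp : HasSum _ _) using 1
    rw [sum_product_right, jacobiColumn, mul_sum]
    refine sum_congr rfl fun m _ => ?_
    by_cases hm : 2 * m ≤ k
    · obtain ⟨a, rfl⟩ := Nat.exists_eq_add_of_le' hm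
      rw [sum_eq_single_of_mem a (mem_range.2 (by omega)) fun b _ hb => by
        rw [if_neg (by simp only; omega), mul_zero]]
      rw [if_pos rfl, show a + 2 * m = a + (0 + 2 * m) by ring, jacobiColumnTerm_add, wCoeff]
      ring
    · rw [jacobiColumnTerm_of_lt c (by omega), mul_zero]
      exact (sum_eq_zero fun b _ => by rw [if_neg (by simp only; omega), mul_zero]).symm

noncomputable def wMajorant (r R : ℝ) (q : ℕ × ℕ) : ℝ :=
  (q.1 + 1) * (2 * r / R) ^ q.1 / R * (4 / R ^ 2) ^ q.2

theorem norm_wCoeff_mul_inv_pow_le (c z : ℂ) (q : ℕ × ℕ) :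
    ‖wCoeff c q * (z ^ (q.1 + 2 * q.2 + 1))⁻¹‖ ≤ wMajorant ‖c‖ ‖z‖ q := by
  obtain ⟨a, m⟩ := q
  have hb := norm_ballot_succ_le a m
  calc ‖wCoeff c (a, m) * (z ^ (a + 2 * m + 1))⁻¹‖
      = ‖c‖ ^ a * ‖ballot (a + 1) m‖ / ‖z‖ ^ (a + 2 * m + 1) := by
        simp [wCoeff, div_eq_mul_inv]
    _ ≤ ‖c‖ ^ a * ((a + 1) * 2 ^ (a + 2 * m)) / ‖z‖ ^ (a + 2 * m + 1) := by gcongr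
    _ = wMajorant ‖c‖ ‖z‖ (a, m) := by
        rw [wMajorant, div_pow, div_pow, show (2 : ℝ) ^ (a + 2 * m) = 2 ^ a * 4 ^ m by
          rw [pow_add, pow_mul]; norm_num]
        ring

theorem summable_wMajorant {r R : ℝ} (hr : 0 ≤ r) (hR : max 2 (2 * r) < R) :
    Summable (wMajorant r R) := by
  have h2 : 2 < R := (le_max_left _ _).trans_lt hR
  have hx : 2 * r / R < 1 := (div_lt_one (by linarith)).2 ((le_max_right _ _).trans_lt hR)
  have hy : 4 / R ^ 2 < 1 := (div_lt_one (by positivity)).2 (by nlinarith)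
  have hgeom : Summable fun a : ℕ => ((a + 1).choose 1 : ℝ) * (2 * r / R) ^ a :=
    summable_choose_mul_geometric_of_norm_lt_one 1
      (by rwa [Real.norm_of_nonneg (by positivity)])
  refine (hgeom.div_const R).mul_of_nonneg (summable_geometric_of_lt_one (by positivity) hy)
    (fun a => by positivity) (fun m => by positivity) |>.congr fun q => ?_
  simp [wMajorant]

theorem hasSum_wFun (c : ℂ) {z : ℂ} (hz : max 2 (2 * ‖c‖) < ‖z‖) :
    HasSum (fun q : ℕ × ℕ => wCoeff c q * (z ^ (q.1 + 2 * q.2 + 1))⁻¹) (wFun c z) := by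
  have hs : Summable fun q : ℕ × ℕ => wCoeff c q * (z ^ (q.1 + 2 * q.2 + 1))⁻¹ :=
    (summable_wMajorant (norm_nonneg c) hz).of_norm_bounded (norm_wCoeff_mul_inv_pow_le c z)
  convert hs.hasSum using 1
  rw [hs.tsum_prod' hs.prod_factor, wFun]
  refine tsum_congr fun n => ?_
  rw [phiFun, ← tsum_mul_left]
  refine tsum_congr fun m => ?_
  rw [wCoeff, ballot, show n + 2 * m + 1 = n + 1 + 2 * m by ring, pow_add, mul_inv]
  ring

theorem circleIntegral_eval_mul_wFun (c : ℂ) (P : ℂ[X]) {R : ℝ}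
    (hR : max 2 (2 * ‖c‖) < R) :
    (∮ z in C(0, R), P.eval z * wFun c z) = 2 * π * I * jacobiMoment c P := by
  have hR0 : 0 < R := by linarith [le_max_left 2 (2 * ‖c‖)]
  have hnorm : ∀ z ∈ sphere (0 : ℂ) |R|, ‖z‖ = R := fun z hz => by
    rw [mem_sphere_zero_iff_norm.1 hz, abs_of_pos hR0]
  obtain ⟨K, hK⟩ := (isCompact_sphere (0 : ℂ) |R|).exists_bound_of_continuousOn
    P.continuous.continuousOn
  have hsum := hasSum_circleIntegral_of_norm_le
    (F := fun q z => wCoeff c q * (P.eval z * (z ^ (q.1 + 2 * q.2 + 1))⁻¹))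
    (u := fun q => K * wMajorant ‖c‖ R q)
    (fun q => continuousOn_const.mul (continuousOn_eval_mul_inv_pow P (by positivity) _))
    (fun q z hz => by
      rw [mul_left_comm, norm_mul, ← hnorm z hz]
      exact mul_le_mul (hK z hz) (norm_wCoeff_mul_inv_pow_le c z q) (norm_nonneg _)
        ((norm_nonneg _).trans (hK z hz)))
    ((summable_wMajorant (norm_nonneg c) hR).mul_left K)
    (fun z hz => by
      simpa only [mul_left_comm] using (hasSum_wFun c (hnorm z hz ▸ hR)).mul_left (P.eval z))
  simp only [circleIntegral.integral_const_mul, circleIntegral_eval_mul_inv_pow P hR0] at hsum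
  exact hsum.unique (by
    simpa only [mul_left_comm] using (hasSum_wCoeff_mul_coeff c P).mul_left (2 * π * I))

/-- **Complex orthogonality on circles for the rank-one perturbation of the free Jacobi
matrix:** for every `R > R₀ = max(2, 2|c|)`,
`(1/(2πi)) ∮_{|z|=R} p_n(z) p_m(z) w(z) dz = δ_{n,m}`. -/
theorem rank_one_perturbation_complex_orthogonality
    (c : ℂ) (p : ℕ → Polynomial ℂ)
    (hp0 : p 0 = 1) (hp1 : p 1 = Polynomial.X - Polynomial.C c)
    (hrec : ∀ n : ℕ, 1 ≤ n → p (n + 1) = Polynomial.X * p n - p (n - 1))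
    (R : ℝ) (hR : max 2 (2 * ‖c‖) < R) :
    ∀ n m : ℕ,
      (2 * Real.pi * Complex.I)⁻¹ *
        ∫ θ in (0:ℝ)..(2 * Real.pi),
          (p n).eval ((R : ℂ) * Complex.exp ((θ : ℂ) * Complex.I)) *
            (p m).eval ((R : ℂ) * Complex.exp ((θ : ℂ) * Complex.I)) *
            wFun c ((R : ℂ) * Complex.exp ((θ : ℂ) * Complex.I)) *
            (Complex.I * (R : ℂ) * Complex.exp ((θ : ℂ) * Complex.I))
        = if n = m then 1 else 0 := by
  intro n m
  rw [← jacobiMoment_mul_eq_ite c hp0 hp1 hrec n m,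
    ← inv_mul_cancel_left₀ two_pi_I_ne_zero (jacobiMoment c (p n * p m)),
    ← circleIntegral_eval_mul_wFun c _ hR]
  simp only [circleIntegral, deriv_circleMap, circleMap, zero_add, eval_mul, smul_eq_mul]
  congr 1
  exact intervalIntegral.integral_congr fun θ _ => by ring
end
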